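/- arXiv:quant-ph/0403120 — 3 statements merged into one kernel-verified Lean document; each statement's English description precedes it below -/
import Mathlib

section
/- Let a, b, c ∈ ℂ and let U be a bounded linear operator on ℓ²(ℤ, ℂ) satisfying U e_n = a·e_{n−1} + b·e_n + c·e_{n+1} for every n ∈ ℤ. Then U is unitary if and only if exactly one of the following holds: (1) |a| = 1 and b = c = 0; (2) |b| = 1 and a = c = 0; (3) |c| = 1 and a = b = 0. -/
open scoped ComplexConjugate

local notation "H" => lp (fun _ : ℤ => ℂ) 2
local notation "e" n => lp.single (E := fun _ : ℤ => ℂ) 2 n 1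

-- two CLMs agreeing on singles are equal
lemma clm_ext_single (T S : H →L[ℂ] H)
    (h : ∀ n : ℤ, T (lp.single 2 n 1) = S (lp.single 2 n 1)) : T = S := by
  refine ContinuousLinearMap.ext fun f => ?_
  have hs := lp.hasSum_single (E := fun _ : ℤ => ℂ) (p := 2) (by norm_num) f
  have hT := T.hasSum hs
  have hS := S.hasSum hs
  refine hT.unique ?_
  convert hS using 2 with n
  have h1 : lp.single (E := fun _ : ℤ => ℂ) 2 n (f n) = f n • lp.single 2 n 1 := by
    rw [← lp.single_smul]; norm_num
  rw [h1, map_smul, map_smul, h n]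

example (f : H) (k : ℤ) : @inner ℂ _ _ (lp.single 2 k (1:ℂ)) f = f k := by
  rw [lp.inner_single_left]
  simp

open ComplexInnerProductSpace in
lemma coord_eq_inner (f : H) (k : ℤ) : f k = @inner ℂ _ _ (lp.single 2 k (1:ℂ)) f := by
  rw [lp.inner_single_left]; simp

lemma inner_single_single (m n : ℤ) :
    @inner ℂ _ _ (lp.single (E := fun _ : ℤ => ℂ) 2 m 1) (lp.single (E := fun _ : ℤ => ℂ) 2 n 1)
      = if m = n then 1 else 0 := by
  rw [lp.inner_single_left, lp.single_apply]
  split_ifs with h h2 h3 <;> simp_all [eq_comm]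

lemma adjoint_formula (a b c : ℂ) (U : H →L[ℂ] H)
    (hU : ∀ n : ℤ, U (lp.single 2 n 1) =
      a • lp.single 2 (n - 1) 1 + b • lp.single 2 n 1 + c • lp.single 2 (n + 1) 1) (m : ℤ) :
    (star U) (lp.single 2 m 1) =
      conj a • lp.single 2 (m + 1) 1 + conj b • lp.single 2 m 1 + conj c • lp.single 2 (m - 1) 1 := by
  apply lp.ext
  funext k
  rw [coord_eq_inner, coord_eq_inner, ContinuousLinearMap.star_eq_adjoint,
    ContinuousLinearMap.adjoint_inner_right, hU k]
  simp only [inner_add_left, inner_add_right, inner_smul_left, inner_smul_right,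
    inner_single_single]
  split_ifs <;> first | omega | ring

lemma unitary_helper (d : ℂ) (hd : ‖d‖ = 1) (t : ℤ) (U : H →L[ℂ] H)
    (h1 : ∀ n : ℤ, U (lp.single 2 n 1) = d • lp.single 2 (n + t) 1)
    (h2 : ∀ n : ℤ, (star U) (lp.single 2 n 1) = conj d • lp.single 2 (n - t) 1) :
    U ∈ unitary (H →L[ℂ] H) := by
  have hdd : conj d * d = 1 := by
    have h : Complex.normSq d = 1 := by
      rw [← Complex.sq_norm, hd]; norm_num
    rw [mul_comm, Complex.mul_conj, h, Complex.ofReal_one]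
  rw [Unitary.mem_iff]
  constructor
  · apply clm_ext_single
    intro n
    rw [ContinuousLinearMap.mul_apply, h1 n, map_smul, h2 (n + t), add_sub_cancel_right,
      smul_smul, mul_comm, hdd, one_smul, ContinuousLinearMap.one_apply]
  · apply clm_ext_single
    intro n
    rw [ContinuousLinearMap.mul_apply, h2 n, map_smul, h1 (n - t), sub_add_cancel,
      smul_smul, hdd, one_smul, ContinuousLinearMap.one_apply]

/-- Let `a b c : ℂ` and let `U` be a bounded linear operator on `ℓ²(ℤ, ℂ)`
satisfying `U eₙ = a • e_{n-1} + b • eₙ + c • e_{n+1}` for every `n : ℤ`.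
Then `U` is unitary iff exactly one of the following holds:
(1) `|a| = 1` and `b = c = 0`; (2) `|b| = 1` and `a = c = 0`; (3) `|c| = 1` and `a = b = 0`.
(The three conditions are mutually exclusive, so "exactly one" is expressed as a disjunction.) -/
theorem quantum_walk_line_no_coinless_unitary (a b c : ℂ)
    (U : lp (fun _ : ℤ => ℂ) 2 →L[ℂ] lp (fun _ : ℤ => ℂ) 2)
    (hU : ∀ n : ℤ, U (lp.single 2 n 1) =
      a • lp.single 2 (n - 1) 1 + b • lp.single 2 n 1 + c • lp.single 2 (n + 1) 1) :
    U ∈ unitary (lp (fun _ : ℤ => ℂ) 2 →L[ℂ] lp (fun _ : ℤ => ℂ) 2) ↔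
      ((‖a‖ = 1 ∧ b = 0 ∧ c = 0) ∨
       (‖b‖ = 1 ∧ a = 0 ∧ c = 0) ∨
       (‖c‖ = 1 ∧ a = 0 ∧ b = 0)) := by
  constructor
  · intro hmem
    have hsU : star U * U = 1 := (Unitary.mem_iff.mp hmem).1
    have key : ∀ m n : ℤ, (inner ℂ (U (lp.single 2 m 1)) (U (lp.single 2 n 1)) : ℂ) =
        if m = n then 1 else 0 := by
      intro m n
      have : (inner ℂ (U (lp.single 2 m 1)) (U (lp.single 2 n 1)) : ℂ) =
          inner ℂ ((star U * U) (lp.single (E := fun _ : ℤ => ℂ) 2 m 1)) (lp.single (E := fun _ : ℤ => ℂ) 2 n 1) := by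
        rw [ContinuousLinearMap.mul_apply, ContinuousLinearMap.star_eq_adjoint,
          ContinuousLinearMap.adjoint_inner_left]
      rw [this, hsU, ContinuousLinearMap.one_apply, inner_single_single]
    have h02 : a = 0 ∨ c = 0 := by
      have h := key 0 2
      rw [hU 0, hU 2] at h
      simp only [inner_add_left, inner_add_right, inner_smul_left, inner_smul_right,
        inner_single_single] at h
      norm_num at h
      tauto
    have h01 : conj b * a + conj c * b = 0 := by
      have h := key 0 1
      rw [hU 0, hU 1] at h
      simp only [inner_add_left, inner_add_right, inner_smul_left, inner_smul_right,
        inner_single_single] at h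
      norm_num at h
      linear_combination h
    have h00 : conj a * a + conj b * b + conj c * c = 1 := by
      have h := key 0 0
      rw [hU 0] at h
      simp only [inner_add_left, inner_add_right, inner_smul_left, inner_smul_right,
        inner_single_single] at h
      norm_num at h
      linear_combination h
    have habs : ∀ z : ℂ, conj z * z = 1 → ‖z‖ = 1 := by
      intro z hz
      have h1 : Complex.normSq z = 1 := by
        have := Complex.mul_conj z
        rw [mul_comm] at this
        rw [this] at hz
        exact_mod_cast hz
      have h2 : ‖z‖ ^ 2 = 1 := by rw [Complex.sq_norm, h1]
      nlinarith [norm_nonneg z]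
    rcases h02 with ha | hc
    · subst ha
      rcases (by simpa using h01 : c = 0 ∨ b = 0) with hc | hb
      · subst hc
        exact Or.inr (Or.inl ⟨habs b (by linear_combination h00), rfl, rfl⟩)
      · subst hb
        exact Or.inr (Or.inr ⟨habs c (by linear_combination h00), rfl, rfl⟩)
    · subst hc
      rcases (by simpa using h01 : b = 0 ∨ a = 0) with hb | ha
      · subst hb
        exact Or.inl ⟨habs a (by linear_combination h00), rfl, rfl⟩
      · subst ha
        exact Or.inr (Or.inl ⟨habs b (by linear_combination h00), rfl, rfl⟩)
  · rintro (⟨ha, hb, hc⟩ | ⟨hb, ha, hc⟩ | ⟨hc, ha, hb⟩)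
    · subst hb; subst hc
      have hadj := adjoint_formula a 0 0 U hU
      refine unitary_helper a ha (-1) U (fun n => ?_) (fun n => ?_)
      · rw [hU n]; simp [sub_eq_add_neg]
      · rw [hadj n]; simp [sub_eq_add_neg, sub_neg_eq_add]
    · subst ha; subst hc
      have hadj := adjoint_formula 0 b 0 U hU
      refine unitary_helper b hb 0 U (fun n => ?_) (fun n => ?_)
      · rw [hU n]; simp
      · rw [hadj n]; simp
    · subst ha; subst hb
      have hadj := adjoint_formula 0 0 c U hU
      refine unitary_helper c hc 1 U (fun n => ?_) (fun n => ?_)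
      · rw [hU n]; simp
      · rw [hadj n]; simp
end

section
/- Let a, b, c ∈ ℂ with a ≠ 0 and c ≠ 0, and let U be a bounded linear operator on ℓ²(ℤ, ℂ) satisfying U e_n = a·e_{n−1} + b·e_n + c·e_{n+1} for every n ∈ ℤ. Then U is not unitary. -/
open scoped InnerProductSpace

/-- Let `a b c : ℂ` with `a ≠ 0` and `c ≠ 0`, and let `U` be a bounded linear
operator on `ℓ²(ℤ, ℂ)` satisfying `U eₙ = a • e_{n-1} + b • eₙ + c • e_{n+1}` for every
`n : ℤ`. Then `U` is not unitary. -/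
theorem quantum_walk_line_translation_invariant_not_unitary (a b c : ℂ)
    (ha : a ≠ 0) (hc : c ≠ 0)
    (U : lp (fun _ : ℤ => ℂ) 2 →L[ℂ] lp (fun _ : ℤ => ℂ) 2)
    (hU : ∀ n : ℤ, U (lp.single 2 n 1) =
      a • lp.single 2 (n - 1) 1 + b • lp.single 2 n 1 + c • lp.single 2 (n + 1) 1) :
    U ∉ unitary (lp (fun _ : ℤ => ℂ) 2 →L[ℂ] lp (fun _ : ℤ => ℂ) 2) := by
  intro hmem
  have key : ∀ x y : lp (fun _ : ℤ => ℂ) 2, ⟪U x, U y⟫_ℂ = ⟪x, y⟫_ℂ := by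
    intro x y
    have h1 : (ContinuousLinearMap.adjoint U) (U y) = y := by
      have := hmem.1
      rw [ContinuousLinearMap.star_eq_adjoint] at this
      calc (ContinuousLinearMap.adjoint U) (U y)
          = (ContinuousLinearMap.adjoint U * U) y := rfl
        _ = y := by rw [this]; rfl
    calc ⟪U x, U y⟫_ℂ = ⟪x, (ContinuousLinearMap.adjoint U) (U y)⟫_ℂ := by
          rw [ContinuousLinearMap.adjoint_inner_right]
      _ = ⟪x, y⟫_ℂ := by rw [h1]
  have h0 : ⟪(lp.single 2 (0:ℤ) (1:ℂ) : lp (fun _ : ℤ => ℂ) 2), lp.single 2 (2:ℤ) 1⟫_ℂ = 0 := by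
    rw [lp.inner_single_left]
    simp [lp.single_apply_ne]
  have h2 := key (lp.single 2 (0:ℤ) 1) (lp.single 2 (2:ℤ) 1)
  rw [hU 0, hU 2, h0] at h2
  simp only [inner_add_add_self, inner_add_left, inner_add_right, inner_smul_left,
    inner_smul_right] at h2
  rw [lp.inner_single_left, lp.inner_single_left, lp.inner_single_left] at h2
  norm_num at h2
  simp only [lp.inner_single_left] at h2
  norm_num [lp.single_apply] at h2
  rcases h2 with h2 | h2
  · exact ha h2
  · exact hc h2
end

section
/- Let m ≥ 1 and let U be an m×m real matrix such that all diagonal entries of U are equal to some α ∈ ℝ and all off-diagonal entries of U are equal to some β ∈ ℝ. If U is orthogonal (real unitary), then U equals one of the four matrices D_m, −D_m, I, or −I. -/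
open Matrix

/-- The Grover diffusion matrix `D_m`: diagonal entries `-1 + 2/m`, off-diagonal
entries `2/m`; equivalently `(2/m) • J - I` with `J` the all-ones matrix. -/
noncomputable def groverDiffusion (m : ℕ) : Matrix (Fin m) (Fin m) ℝ :=
  (2 / (m : ℝ)) • Matrix.of (fun _ _ => (1 : ℝ)) - 1

/-- Let `m ≥ 1` and let `U` be an `m×m` real matrix whose diagonal entries
all equal `α` and whose off-diagonal entries all equal `β`. If `U` is orthogonal
(real unitary), then `U` equals one of `D_m`, `-D_m`, `I`, `-I`. -/
theorem orthogonal_constant_diag_offdiag_eq_grover (m : ℕ) (hm : 1 ≤ m)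
    (U : Matrix (Fin m) (Fin m) ℝ) (α β : ℝ)
    (hdiag : ∀ i, U i i = α) (hoff : ∀ i j, i ≠ j → U i j = β)
    (hU : U ∈ Matrix.orthogonalGroup (Fin m) ℝ) :
    U = groverDiffusion m ∨ U = -groverDiffusion m ∨ U = 1 ∨ U = -1 := by
  have hmpos : (0:ℝ) < m := by exact_mod_cast Nat.lt_of_lt_of_le Nat.zero_lt_one hm
  have hmne : (m:ℝ) ≠ 0 := ne_of_gt hmpos
  have hUU : U * Uᵀ = 1 := by
    have h := (Matrix.mem_orthogonalGroup_iff (Fin m) ℝ).mp hU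
    simpa [Matrix.star_eq_conjTranspose, Matrix.conjTranspose] using h
  have key : ∀ i j : Fin m, (∑ k, U i k * U j k) = if i = j then (1:ℝ) else 0 := by
    intro i j
    have := congrFun (congrFun hUU i) j
    simpa [Matrix.mul_apply, Matrix.transpose_apply, Matrix.one_apply] using this
  -- diagonal equation
  set i0 : Fin m := ⟨0, hm⟩ with hi0
  have hA : α * α + ((m:ℝ) - 1) * (β * β) = 1 := by
    have h := key i0 i0
    rw [if_pos rfl] at h
    rw [← Finset.add_sum_erase _ _ (Finset.mem_univ i0)] at h
    rw [Finset.sum_congr rfl (fun k hk => by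
      rw [hoff i0 k (Ne.symm (Finset.ne_of_mem_erase hk))])] at h
    rw [Finset.sum_const, Finset.card_erase_of_mem (Finset.mem_univ i0),
      Finset.card_univ, Fintype.card_fin, nsmul_eq_mul, hdiag] at h
    rw [Nat.cast_sub hm] at h
    simpa using h
  rcases eq_or_lt_of_le hm with h1 | h2
  · -- m = 1 case
    have hαsq : α * α = 1 := by
      have : ((m:ℝ) - 1) = 0 := by rw [← h1]; norm_num
      rw [this] at hA; linarith
    rcases mul_self_eq_one_iff.mp hαsq with hα | hα
    · right; right; left
      ext i j
      have hij : i = j := by omega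
      subst hij
      simp [hdiag, hα, Matrix.one_apply]
    · right; right; right
      ext i j
      have hij : i = j := by omega
      subst hij
      simp [hdiag, hα, Matrix.one_apply]
  · -- m ≥ 2 case
    have hm2 : 2 ≤ m := h2
    set j0 : Fin m := ⟨1, h2⟩ with hj0
    have hne : i0 ≠ j0 := by simp [hi0, hj0, Fin.ext_iff]
    have hj0mem : j0 ∈ Finset.univ.erase i0 := Finset.mem_erase.mpr ⟨Ne.symm hne, Finset.mem_univ _⟩
    have hB : α * β + β * α + ((m:ℝ) - 2) * (β * β) = 0 := by
      have h := key i0 j0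
      rw [if_neg hne] at h
      rw [← Finset.add_sum_erase _ _ (Finset.mem_univ i0)] at h
      rw [← Finset.add_sum_erase _ _ hj0mem] at h
      rw [Finset.sum_congr rfl (fun k hk => by
        have hk1 : k ≠ j0 := (Finset.mem_erase.mp hk).1
        have hk2 : k ≠ i0 := (Finset.mem_erase.mp (Finset.mem_erase.mp hk).2).1
        rw [hoff i0 k (Ne.symm hk2), hoff j0 k (Ne.symm hk1)])] at h
      rw [Finset.sum_const, Finset.card_erase_of_mem hj0mem,
        Finset.card_erase_of_mem (Finset.mem_univ i0),
        Finset.card_univ, Fintype.card_fin, nsmul_eq_mul,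
        hdiag, hdiag, hoff i0 j0 hne, hoff j0 i0 (Ne.symm hne)] at h
      have hcast : ((m - 1 - 1 : ℕ) : ℝ) = (m:ℝ) - 2 := by
        rw [show (m - 1 - 1 : ℕ) = m - 2 from by omega, Nat.cast_sub hm2]; norm_num
      rw [hcast] at h
      linarith [h]
    by_cases hβ : β = 0
    · subst hβ
      have hαsq : α * α = 1 := by nlinarith [hA]
      rcases mul_self_eq_one_iff.mp hαsq with hα | hα
      · right; right; left
        ext i j
        by_cases hij : i = j
        · subst hij; simp [hdiag, hα, Matrix.one_apply]
        · rw [hoff i j hij]; simp [Matrix.one_apply, hij]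
      · right; right; right
        ext i j
        by_cases hij : i = j
        · subst hij; simp [hdiag, hα, Matrix.one_apply]
        · rw [hoff i j hij]; simp [Matrix.one_apply, hij]
    · have hα2 : 2 * α + ((m:ℝ) - 2) * β = 0 := by
        have hfac : (2 * α + ((m:ℝ) - 2) * β) * β = 0 := by linear_combination hB
        rcases mul_eq_zero.mp hfac with h | h
        · exact h
        · exact absurd h hβ
      have hfac2 : ((m:ℝ) * β - 2) * ((m:ℝ) * β + 2) = 0 := by
        linear_combination 4 * hA - (2 * α - ((m:ℝ) - 2) * β) * hα2
      rcases mul_eq_zero.mp hfac2 with h | h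
      · -- β = 2/m
        have hβval : β = 2 / m := by field_simp; linarith
        have hαval : α = 2 / m - 1 := by
          rw [hβval] at hα2
          field_simp at hα2 ⊢
          linarith
        left
        ext i j
        by_cases hij : i = j
        · subst hij
          simp [groverDiffusion, hdiag, hαval, Matrix.one_apply, Matrix.sub_apply]
        · rw [hoff i j hij]
          simp [groverDiffusion, hβval, Matrix.one_apply, hij, Matrix.sub_apply]
      · -- β = -2/m
        have hβval : β = -(2 / m) := by field_simp; linarith
        have hαval : α = -(2 / m - 1) := by
          rw [hβval] at hα2
          field_simp at hα2 ⊢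
          linarith
        right; left
        ext i j
        by_cases hij : i = j
        · subst hij
          simp [groverDiffusion, hdiag, hαval, Matrix.one_apply, Matrix.sub_apply]
        · rw [hoff i j hij]
          simp [groverDiffusion, hβval, Matrix.one_apply, hij, Matrix.sub_apply]
end
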